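/- arXiv:1310.1020 — 3 statements merged into one kernel-verified Lean document; each statement's English description precedes it below -/
import Mathlib

section
/- Let ω(x) = √(γ|x|) for x < 0 and γ ∈ (0,2). Then the Durrleman-type expression (1 − x·ω'(x)/ω(x))² − (1/4)ω(x)²ω'(x)² + ω(x)ω''(x) equals −(1/(16x))·((γ² − 4)x − 4γ), and this expression is nonnegative for all x ≤ 4γ/(γ² − 4). -/
/-!
With `s = √(-γx)` we have `s² = -γx`, so the elasticity `x ω'/ω = -γx/(2s²)` is the constant `1/2`,
`ω²ω'²/4 = γ²/16` and `ωω'' = -γ²/(4s²) = γ/(4x)`. The expression is therefore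
`1/4 - γ²/16 + γ/(4x)`, which is the claimed formula; for `γ ∈ (0,2)` and `x ≤ 4γ/(γ²-4) < 0`
both factors `-1/(16x)` and `(γ²-4)x - 4γ` are nonnegative.
-/

namespace Durrleman

open Real

/-- `(1 - xω'/ω)² - ω²ω'²/4 + ωω''` for `ω(x) = √(-γx)`. -/
noncomputable def expr (γ x : ℝ) : ℝ :=
  (1 - x * (-γ/(2*√(-γ*x))) / √(-γ*x))^2
    - (1/4)*(√(-γ*x))^2 * (-γ/(2*√(-γ*x)))^2
    + √(-γ*x) * (-γ^2/(4*(-γ*x)^((3:ℝ)/2)))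

theorem rpow_three_halves_eq_sqrt_pow_three {t : ℝ} (ht : 0 ≤ t) : t ^ ((3:ℝ)/2) = √t ^ 3 := by
  rw [show (3:ℝ)/2 = 1/2 * (3:ℕ) by norm_num, rpow_mul_natCast ht, ← sqrt_eq_rpow]

theorem expr_eq_quarter_sub_add {γ x : ℝ} (hγ : 0 < γ) (hx : x < 0) :
    expr γ x = 1/4 - γ^2/16 + γ/(4*x) := by
  have hx0 : x ≠ 0 := hx.ne
  have hpos : 0 < -γ*x := by nlinarith
  have hs : √(-γ*x) ≠ 0 := (sqrt_pos.mpr hpos).ne'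
  have hs2 : √(-γ*x) ^ 2 = -γ*x := sq_sqrt hpos.le
  unfold expr
  rw [rpow_three_halves_eq_sqrt_pow_three hpos.le]
  set s := √(-γ*x)
  have elasticity : 1 - x * (-γ/(2*s)) / s = 1/2 := by
    field_simp
    linear_combination hs2
  have hω'sq : (1/4)*s^2 * (-γ/(2*s))^2 = γ^2/16 := by
    field_simp
    ring
  have hω'' : s * (-γ^2/(4*s^3)) = γ/(4*x) := by
    field_simp
    linear_combination -hs2
  rw [elasticity, hω'sq, hω'']
  norm_num

theorem expr_eq {γ x : ℝ} (hγ : 0 < γ) (hx : x < 0) :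
    expr γ x = -(1/(16*x)) * ((γ^2-4)*x - 4*γ) := by
  rw [expr_eq_quarter_sub_add hγ hx]
  field_simp [hx.ne]
  ring

theorem expr_nonneg {γ x : ℝ} (hγ : γ ∈ Set.Ioo (0:ℝ) 2) (hx : x ≤ 4*γ/(γ^2-4)) :
    0 ≤ expr γ x := by
  obtain ⟨hγ0, hγ2⟩ := hγ
  have hden : γ^2 - 4 < 0 := by nlinarith
  have hxneg : x < 0 := hx.trans_lt (div_neg_of_pos_of_neg (by linarith) hden)
  rw [expr_eq hγ0 hxneg]
  have hfactor : 0 ≤ (γ^2-4)*x - 4*γ := by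
    have := (le_div_iff_of_neg hden).mp hx
    linarith
  have hcoeff : 0 ≤ -(1/(16*x)) := by
    rw [neg_nonneg]
    exact (one_div_neg.mpr (by linarith)).le
  exact mul_nonneg hcoeff hfactor

end Durrleman

theorem durrleman_expression (γ : ℝ) (hγ : γ ∈ Set.Ioo (0:ℝ) 2) :
    (∀ x < (0:ℝ),
      (1 - x * (-γ/(2*Real.sqrt (-γ*x))) / Real.sqrt (-γ*x))^2
        - (1/4)*(Real.sqrt (-γ*x))^2 * (-γ/(2*Real.sqrt (-γ*x)))^2
        + Real.sqrt (-γ*x) * (-γ^2/(4*(-γ*x)^((3:ℝ)/2)))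
      = -(1/(16*x)) * ((γ^2-4)*x - 4*γ)) ∧
    (∀ x ≤ 4*γ/(γ^2-4),
      0 ≤ (1 - x * (-γ/(2*Real.sqrt (-γ*x))) / Real.sqrt (-γ*x))^2
        - (1/4)*(Real.sqrt (-γ*x))^2 * (-γ/(2*Real.sqrt (-γ*x)))^2
        + Real.sqrt (-γ*x) * (-γ^2/(4*(-γ*x)^((3:ℝ)/2)))) :=
  ⟨fun _ hx => Durrleman.expr_eq hγ.1 hx, fun _ hx => Durrleman.expr_nonneg hγ hx⟩
end

section
/- Let S be a nonnegative integrable random variable with E[S] = S₀ > 0 and P(S = 0) = p > 0. Define G(K) = (K/S₀)·E[(S₀²/K − S)⁺] for K > 0. Then G(K) → p·S₀ > 0 as K → ∞; consequently G cannot be of the form G(K) = E[(X − K)⁺] for any integrable random variable X (since such a call price function tends to 0 at infinity). -/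
/-!
For `K > 0`, `G K = E[(S₀ - (K/S₀) S)⁺]`. As `K → ∞` the integrand tends to `S₀` on `{S = 0}` and
to `0` elsewhere, and it is dominated by `S₀`, so `G K → p S₀ > 0`. A call price
`E[(X - K)⁺]` is dominated by `|X|` and tends to `0`, so `G` cannot be one.
-/

open MeasureTheory Filter Topology

theorem tendsto_integral_max_sub_atTop_zero {Ω : Type*} [MeasurableSpace Ω] {ν : Measure Ω}
    {X : Ω → ℝ} (hX : Integrable X ν) :
    Tendsto (fun K => ∫ ω, max (X ω - K) 0 ∂ν) atTop (𝓝 0) := by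
  have hlim : Tendsto (fun K => ∫ ω, max (X ω - K) 0 ∂ν) atTop (𝓝 (∫ _, (0 : ℝ) ∂ν)) := by
    refine tendsto_integral_filter_of_dominated_convergence (fun ω => |X ω|)
      (Eventually.of_forall fun K =>
        (hX.1.sub aestronglyMeasurable_const).sup aestronglyMeasurable_const) ?_ hX.abs ?_
    · filter_upwards [eventually_ge_atTop 0] with K hK
      refine Eventually.of_forall fun ω => ?_
      rw [Real.norm_eq_abs, abs_of_nonneg (le_max_right _ _)]
      exact max_le (by linarith [le_abs_self (X ω)]) (abs_nonneg _)
    · refine Eventually.of_forall fun ω => tendsto_const_nhds.congr' ?_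
      filter_upwards [eventually_ge_atTop (X ω)] with K hK
      exact (max_eq_right (by linarith)).symm
  rwa [integral_zero] at hlim

theorem tendsto_max_sub_mul_atTop {a s : ℝ} (ha : 0 ≤ a) (hs : 0 ≤ s) :
    Tendsto (fun t => max (a - t * s) 0) atTop (𝓝 (if s = 0 then a else 0)) := by
  rcases hs.eq_or_lt with rfl | hs
  · simp [ha]
  refine tendsto_const_nhds.congr' ?_
  filter_upwards [eventually_ge_atTop (a / s)] with t ht
  rw [if_neg hs.ne', eq_comm, max_eq_right]
  linarith [(div_le_iff₀ hs).mp ht]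

theorem tendsto_integral_max_sub_mul_atTop {Ω : Type*} [MeasurableSpace Ω] {μ : Measure Ω}
    [IsFiniteMeasure μ] {S : Ω → ℝ} (hS : 0 ≤ᵐ[μ] S) (hint : Integrable S μ)
    {a : ℝ} (ha : 0 ≤ a) :
    Tendsto (fun t => ∫ ω, max (a - t * S ω) 0 ∂μ) atTop (𝓝 (μ.real {ω | S ω = 0} * a)) := by
  have hzero : NullMeasurableSet {ω | S ω = 0} μ :=
    hint.aemeasurable.nullMeasurableSet_preimage (measurableSet_singleton 0)
  have hlim : ∫ ω, {ω | S ω = 0}.indicator (fun _ => a) ω ∂μ = μ.real {ω | S ω = 0} * a := by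
    rw [integral_indicator₀ hzero, setIntegral_const, smul_eq_mul]
  rw [← hlim]
  refine tendsto_integral_filter_of_dominated_convergence (fun _ => a)
    (Eventually.of_forall fun t =>
      (aestronglyMeasurable_const.sub (hint.1.const_mul _)).sup aestronglyMeasurable_const)
    ?_ (integrable_const a) ?_
  · filter_upwards [eventually_ge_atTop 0] with t ht
    filter_upwards [hS] with ω (hω : 0 ≤ S ω)
    rw [Real.norm_eq_abs, abs_of_nonneg (le_max_right _ _)]
    exact max_le (by nlinarith [hω]) ha
  · filter_upwards [hS] with ω (hω : 0 ≤ S ω)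
    simpa only [Set.indicator_apply, Set.mem_ofPred_eq] using tendsto_max_sub_mul_atTop ha hω

theorem G_not_a_call_price_general
    {Ω : Type*} [MeasurableSpace Ω] (μ : Measure Ω) [IsProbabilityMeasure μ]
    (S : Ω → ℝ) (hS : ∀ ω, 0 ≤ S ω) (hint : Integrable S μ)
    (S₀ : ℝ) (hS0pos : 0 < S₀)
    (p : ℝ) (hp : p = (μ {ω | S ω = 0}).toReal) (hppos : 0 < p)
    (G : ℝ → ℝ) (hG : G = fun K => (K/S₀) * ∫ ω, max (S₀^2/K - S ω) 0 ∂μ) :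
    Filter.Tendsto G Filter.atTop (nhds (p * S₀)) ∧
    0 < p * S₀ ∧
    ¬ ∃ (Ω' : Type) (_ : MeasurableSpace Ω') (ν : Measure Ω')
        (_ : IsProbabilityMeasure ν) (X : Ω' → ℝ),
        Integrable X ν ∧ (∀ ω, 0 ≤ X ω) ∧
        ∀ K > 0, G K = ∫ ω, max (X ω - K) 0 ∂ν := by
  have hG_eq : ∀ K > 0, ∫ ω, max (S₀ - K / S₀ * S ω) 0 ∂μ = G K := by
    intro K hK
    simp only [hG]
    rw [← integral_const_mul]
    refine integral_congr_ae (Eventually.of_forall fun ω => ?_)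
    dsimp only
    rw [mul_max_of_nonneg _ _ (by positivity), mul_zero]
    congr 1
    field_simp
  have hG_lim : Tendsto G atTop (𝓝 (p * S₀)) := by
    rw [hp, ← measureReal_def]
    refine ((tendsto_integral_max_sub_mul_atTop (ae_of_all μ hS) hint hS0pos.le).comp
      (tendsto_id.atTop_div_const hS0pos)).congr' ?_
    filter_upwards [eventually_gt_atTop 0] with K hK
    exact hG_eq K hK
  refine ⟨hG_lim, mul_pos hppos hS0pos, ?_⟩
  rintro ⟨Ω', _, ν, _, X, hX, -, hGX⟩
  have hG_zero : Tendsto G atTop (𝓝 0) :=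
    (tendsto_integral_max_sub_atTop_zero hX).congr' <|
      (eventually_gt_atTop 0).mono fun K hK => (hGX K hK).symm
  exact (mul_pos hppos hS0pos).ne' (tendsto_nhds_unique hG_lim hG_zero)

theorem G_not_a_call_price
    {Ω : Type*} [MeasurableSpace Ω] (μ : Measure Ω) [IsProbabilityMeasure μ]
    (S : Ω → ℝ) (hS : ∀ ω, 0 ≤ S ω) (hint : Integrable S μ)
    (S₀ : ℝ) (hS0 : S₀ = ∫ ω, S ω ∂μ) (hS0pos : 0 < S₀)
    (p : ℝ) (hp : p = (μ {ω | S ω = 0}).toReal) (hppos : 0 < p)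
    (G : ℝ → ℝ) (hG : G = fun K => (K/S₀) * ∫ ω, max (S₀^2/K - S ω) 0 ∂μ) :
    Filter.Tendsto G Filter.atTop (nhds (p * S₀)) ∧
    0 < p * S₀ ∧
    ¬ ∃ (Ω' : Type) (_ : MeasurableSpace Ω') (ν : Measure Ω')
        (_ : IsProbabilityMeasure ν) (X : Ω' → ℝ),
        Integrable X ν ∧ (∀ ω, 0 ≤ X ω) ∧
        ∀ K > 0, G K = ∫ ω, max (X ω - K) 0 ∂ν :=
  G_not_a_call_price_general μ S hS hint S₀ hS0pos p hp hppos G hG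
end

section
/- Let S̃ > 0 ℙ-a.s. with E[S̃^L w(S̃)]-type geometric symmetry: suppose E[φ(S̃/s₀)] = E[(S̃/s₀)·φ(s₀/S̃)] for all bounded measurable φ, where s₀ = E[S̃]. Let Z be independent of S̃ with ℙ(Z = 1) = 1 − p, ℙ(Z = 0) = p, and S = S̃·Z, S₀ = E[S] = (1−p)s₀. Then for dℚ/dℙ = S/S₀, the ℙ-law of (1−p)S/S₀ conditional on {S > 0} equals the ℚ-law of S₀/((1−p)S). -/
/-!
On `{S > 0} = {Z = 1}` we have `S = S̃`, so by independence the law of `S / s₀` conditioned on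
`{S > 0}` is the unconditioned law of `X = S̃ / s₀`. The density `S / S₀ = X · Z / (1 - p)` is a
product of independent factors, the second of mean one, and it vanishes off `{Z = 1}`; hence the
`ℚ`-law of `s₀ / S` is the law of `X⁻¹` under the size-biased measure `X · ℙ`. Geometric symmetry,
tested on indicators, says exactly that this is the `ℙ`-law of `X`.
-/

open MeasureTheory ProbabilityTheory

namespace ProbabilityTheory

variable {Ω α β γ : Type*} {mΩ : MeasurableSpace Ω} {mα : MeasurableSpace α}
  {mβ : MeasurableSpace β} {mγ : MeasurableSpace γ} {μ : Measure Ω}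

def IsGeometricallySymmetric (X : Ω → ℝ) (μ : Measure Ω) : Prop :=
  ∀ φ : ℝ → ℝ, Measurable φ → (∀ t, 0 ≤ φ t) → (∃ B, ∀ t, φ t ≤ B) →
    ∫ ω, φ (X ω) ∂μ = ∫ ω, X ω * φ (X ω)⁻¹ ∂μ

theorem IsGeometricallySymmetric.map_inv_withDensity [IsFiniteMeasure μ] {X : Ω → ℝ}
    (hsym : IsGeometricallySymmetric X μ) (hX : Measurable X) (hX0 : ∀ ω, 0 ≤ X ω)
    (hint : Integrable X μ) :
    (μ.withDensity fun ω => ENNReal.ofReal (X ω)).map (fun ω => (X ω)⁻¹) = μ.map X := by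
  ext A hA
  have hXinv : Measurable fun ω => (X ω)⁻¹ := hX.inv
  rw [Measure.map_apply hXinv hA, Measure.map_apply hX hA, withDensity_apply _ (hXinv hA)]
  have hφ := hsym (A.indicator 1) (measurable_const.indicator hA)
    (Set.indicator_nonneg fun _ _ => zero_le_one) ⟨1, Set.indicator_le_self' fun _ _ => zero_le_one⟩
  have hL : ∫ ω, A.indicator 1 (X ω) ∂μ = μ.real (X ⁻¹' A) := by
    rw [← integral_indicator_one (hX hA)]
    rfl
  have hR : ∫ ω, X ω * A.indicator 1 (X ω)⁻¹ ∂μ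
      = ∫ ω, ((fun ω => (X ω)⁻¹) ⁻¹' A).indicator X ω ∂μ := by
    congr 1; funext ω
    by_cases h : (X ω)⁻¹ ∈ A <;> simp [h]
  rw [hL, hR, integral_indicator (hXinv hA)] at hφ
  rw [← ofReal_measureReal, hφ,
    ofReal_integral_eq_lintegral_ofReal hint.integrableOn (.of_forall hX0)]

theorem IndepFun.map_cond_preimage [IsFiniteMeasure μ] {X : Ω → α} {Y : Ω → β}
    (hXY : IndepFun X Y μ) (hX : Measurable X) (hY : Measurable Y) {t : Set β}
    (ht : MeasurableSet t) (hμt : μ (Y ⁻¹' t) ≠ 0) :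
    (μ[|Y ⁻¹' t]).map X = μ.map X := by
  ext A hA
  rw [Measure.map_apply hX hA, Measure.map_apply hX hA, cond_apply (hY ht), Set.inter_comm,
    hXY.measure_inter_preimage_eq_mul _ _ hA ht, mul_comm, mul_assoc,
    ENNReal.mul_inv_cancel hμt (measure_ne_top _ _), mul_one]

theorem IndepFun.map_withDensity_mul {X : Ω → α} {Y : Ω → β} (hXY : IndepFun X Y μ)
    (hX : Measurable X) (hY : Measurable Y) {f : α → ENNReal} {g : β → ENNReal}
    (hf : Measurable f) (hg : Measurable g) (hg1 : ∫⁻ ω, g (Y ω) ∂μ = 1) {h : α → γ}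
    (hh : Measurable h) :
    (μ.withDensity fun ω => f (X ω) * g (Y ω)).map (fun ω => h (X ω)) =
      (μ.withDensity fun ω => f (X ω)).map (fun ω => h (X ω)) := by
  ext A hA
  have hhX : Measurable fun ω => h (X ω) := hh.comp hX
  have hA' : MeasurableSet ((fun ω => h (X ω)) ⁻¹' A) := hhX hA
  rw [Measure.map_apply hhX hA, Measure.map_apply hhX hA,
    withDensity_apply _ hA', withDensity_apply _ hA', ← lintegral_indicator hA',
    ← lintegral_indicator hA']
  have hind : IndepFun (fun ω => (h ⁻¹' A).indicator f (X ω)) (fun ω => g (Y ω)) μ :=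
    hXY.comp (hf.indicator (hh hA)) hg
  calc ∫⁻ ω, ((fun ω => h (X ω)) ⁻¹' A).indicator (fun ω => f (X ω) * g (Y ω)) ω ∂μ
      = ∫⁻ ω, (h ⁻¹' A).indicator f (X ω) * g (Y ω) ∂μ := by
        congr 1; funext ω
        by_cases hω : h (X ω) ∈ A <;> simp [hω]
    _ = (∫⁻ ω, (h ⁻¹' A).indicator f (X ω) ∂μ) * ∫⁻ ω, g (Y ω) ∂μ :=
        lintegral_mul_eq_lintegral_mul_lintegral_of_indepFun''
          ((hf.indicator (hh hA)).comp hX).aemeasurable (hg.comp hY).aemeasurable hind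
    _ = ∫⁻ ω, ((fun ω => h (X ω)) ⁻¹' A).indicator (fun ω => f (X ω)) ω ∂μ := by
        rw [hg1, mul_one]; rfl

theorem measure_preimage_one_of_zero_or_one [IsProbabilityMeasure μ] {Z : Ω → ℝ}
    (hZ : Measurable Z) (hZval : ∀ ω, Z ω = 0 ∨ Z ω = 1) :
    μ (Z ⁻¹' {1}) = ENNReal.ofReal (1 - μ.real (Z ⁻¹' {0})) := by
  have hcompl : Z ⁻¹' {1} = (Z ⁻¹' {0})ᶜ := by
    ext ω; rcases hZval ω with h | h <;> simp [h]
  rw [hcompl, prob_compl_eq_one_sub (hZ (measurableSet_singleton 0)), ENNReal.ofReal_sub 1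
    measureReal_nonneg, ENNReal.ofReal_one, ofReal_measureReal]

theorem lintegral_ofReal_div_eq_one_of_zero_or_one {Z : Ω → ℝ} (hZ : Measurable Z)
    (hZval : ∀ ω, Z ω = 0 ∨ Z ω = 1) {q : ℝ} (hq : 0 < q)
    (hZ1 : μ (Z ⁻¹' {1}) = ENNReal.ofReal q) :
    ∫⁻ ω, ENNReal.ofReal (Z ω / q) ∂μ = 1 := by
  have hind : (fun ω => ENNReal.ofReal (Z ω / q)) =
      (Z ⁻¹' {1}).indicator fun _ => ENNReal.ofReal q⁻¹ := by
    funext ω; rcases hZval ω with h | h <;> simp [h]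
  rw [hind, lintegral_indicator_const (hZ (measurableSet_singleton 1)), hZ1,
    ← ENNReal.ofReal_mul (inv_nonneg.2 hq.le), inv_mul_cancel₀ hq.ne', ENNReal.ofReal_one]

end ProbabilityTheory

theorem restricted_symmetry_general
    {Ω : Type*} [MeasurableSpace Ω] (Pr : Measure Ω) [IsProbabilityMeasure Pr]
    (St Z : Ω → ℝ) (hStmeas : Measurable St) (hZmeas : Measurable Z)
    (hStpos : ∀ ω, 0 < St ω) (hint : Integrable St Pr)
    (s₀ : ℝ) (hs0pos : 0 < s₀)
    (hsym : ∀ φ : ℝ → ℝ, Measurable φ → (∀ t, 0 ≤ φ t) → (∃ B, ∀ t, φ t ≤ B) →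
      ∫ ω, φ (St ω / s₀) ∂Pr = ∫ ω, (St ω / s₀) * φ (s₀ / St ω) ∂Pr)
    (p : ℝ) (hp : p ∈ Set.Ioo (0:ℝ) 1)
    (hZval : ∀ ω, Z ω = 0 ∨ Z ω = 1) (hZp : (Pr {ω | Z ω = 0}).toReal = p)
    (hindep : IndepFun St Z Pr)
    (S : Ω → ℝ) (hSdef : S = fun ω => St ω * Z ω)
    (S₀ : ℝ) (hS0 : S₀ = (1-p) * s₀)
    (Qm : Measure Ω) (hQ : Qm = Pr.withDensity (fun ω => ENNReal.ofReal (S ω / S₀))) :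
    Measure.map (fun ω => (1-p) * S ω / S₀) (Pr[|{ω | 0 < S ω}]) =
      Measure.map (fun ω => S₀ / ((1-p) * S ω)) Qm := by
  have h1p : 0 < 1 - p := sub_pos.2 hp.2
  subst hSdef hS0 hQ
  set X : Ω → ℝ := fun ω => St ω / s₀
  have hXmeas : Measurable X := hStmeas.div_const s₀
  have hXZ : IndepFun X Z Pr := hindep.comp (measurable_id.div_const s₀) measurable_id
  have hXsym : IsGeometricallySymmetric X Pr := fun φ hφ hφ0 hφB => by
    simpa only [X, inv_div] using hsym φ hφ hφ0 hφB
  have hZ1 : Pr (Z ⁻¹' {1}) = ENNReal.ofReal (1 - p) := by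
    rw [measure_preimage_one_of_zero_or_one hZmeas hZval, measureReal_def, ← hZp]; rfl
  have hpos : {ω | 0 < St ω * Z ω} = Z ⁻¹' {1} := by
    ext ω; rcases hZval ω with h | h <;> simp [h, hStpos ω]
  have hdens : (fun ω => ENNReal.ofReal (St ω * Z ω / ((1 - p) * s₀))) =
      fun ω => ENNReal.ofReal (X ω) * ENNReal.ofReal (Z ω / (1 - p)) := by
    funext ω
    rw [← ENNReal.ofReal_mul (div_nonneg (hStpos ω).le hs0pos.le)]
    congr 1; field_simp
  calc _ = (Pr[|Z ⁻¹' {1}]).map X := by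
        rw [hpos]
        refine Measure.map_congr ((ae_cond_mem (hZmeas (measurableSet_singleton 1))).mono
          fun ω (hω : Z ω = 1) => ?_)
        simp only [X, hω]; field_simp
    _ = Pr.map X := hXZ.map_cond_preimage hXmeas hZmeas (measurableSet_singleton 1)
        (hZ1 ▸ (ENNReal.ofReal_pos.2 h1p).ne')
    _ = (Pr.withDensity fun ω => ENNReal.ofReal (X ω)).map (fun ω => (X ω)⁻¹) :=
        (hXsym.map_inv_withDensity hXmeas (fun ω => (div_pos (hStpos ω) hs0pos).le)
          (hint.div_const s₀)).symm
    _ = (Pr.withDensity fun ω => ENNReal.ofReal (X ω) * ENNReal.ofReal (Z ω / (1 - p))).map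
          (fun ω => (X ω)⁻¹) :=
        (hXZ.map_withDensity_mul hXmeas hZmeas ENNReal.measurable_ofReal
          (ENNReal.measurable_ofReal.comp (measurable_id.div_const _))
          (lintegral_ofReal_div_eq_one_of_zero_or_one hZmeas hZval h1p hZ1) measurable_inv).symm
    _ = _ := by
      rw [hdens]
      refine Measure.map_congr <| (ae_withDensity_iff (by fun_prop)).2 <| .of_forall fun ω hω => ?_
      have hZω : Z ω = 1 := (hZval ω).resolve_left fun h => hω (by simp [h])
      simp only [X, hZω]; field_simp

theorem restricted_symmetry
    {Ω : Type*} [MeasurableSpace Ω] (Pr : Measure Ω) [IsProbabilityMeasure Pr]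
    (St Z : Ω → ℝ) (hStmeas : Measurable St) (hZmeas : Measurable Z)
    (hStpos : ∀ ω, 0 < St ω) (hint : Integrable St Pr)
    (s₀ : ℝ) (hs0 : s₀ = ∫ ω, St ω ∂Pr) (hs0pos : 0 < s₀)
    (hsym : ∀ φ : ℝ → ℝ, Measurable φ → (∀ t, 0 ≤ φ t) → (∃ B, ∀ t, φ t ≤ B) →
      ∫ ω, φ (St ω / s₀) ∂Pr = ∫ ω, (St ω / s₀) * φ (s₀ / St ω) ∂Pr)
    (p : ℝ) (hp : p ∈ Set.Ioo (0:ℝ) 1)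
    (hZval : ∀ ω, Z ω = 0 ∨ Z ω = 1) (hZp : (Pr {ω | Z ω = 0}).toReal = p)
    (hindep : IndepFun St Z Pr)
    (S : Ω → ℝ) (hSdef : S = fun ω => St ω * Z ω)
    (S₀ : ℝ) (hS0 : S₀ = (1-p) * s₀)
    (Qm : Measure Ω) (hQ : Qm = Pr.withDensity (fun ω => ENNReal.ofReal (S ω / S₀))) :
    Measure.map (fun ω => (1-p) * S ω / S₀) (Pr[|{ω | 0 < S ω}]) =
      Measure.map (fun ω => S₀ / ((1-p) * S ω)) Qm :=
  restricted_symmetry_general Pr St Z hStmeas hZmeas hStpos hint s₀ hs0pos hsym p hp hZval hZp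
    hindep S hSdef S₀ hS0 Qm hQ
end
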